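/- arXiv:math/0405523 — 2 statements merged into one kernel-verified Lean document; each statement's English description precedes it below -/
import Mathlib

section
/- Let A be a commutative noetherian ring and let C be a semi-dualizing module for A. Then there is an isomorphism of (A ⋉ C)-modules Hom_A(A ⋉ C, C) ≅ A ⋉ C, and Ext^i_A(A ⋉ C, C) = 0 for all i ≥ 1. -/
open TrivSqZeroExt

/-- `Ext^i_R(M, N)` for modules `M`, `N` over a commutative ring `R`. -/
noncomputable abbrev ExtGroup (R : Type) [CommRing R] (i : ℕ)
    (M : Type) [AddCommGroup M] [Module R M] (N : Type) [AddCommGroup N] [Module R N] : Type :=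
  ((Ext R (ModuleCat R) i).obj (Opposite.op (ModuleCat.of R M))).obj (ModuleCat.of R N)

section
variable (A : Type) [CommRing A] (C : Type) [AddCommGroup C] [Module A C]

/-- Over a commutative ring every module is canonically a module over the opposite ring;
this provides the data needed for Mathlib's `TrivSqZeroExt A C` to be a commutative ring. -/
noncomputable instance : Module Aᵐᵒᵖ C :=
  Module.compHom C ((RingHom.id A).fromOpposite Commute.all)

instance : IsCentralScalar A C := ⟨fun _ _ => rfl⟩

/-- `C` is a semi-dualizing module for `A`: it is finitely generated, the canonical map
`A → Hom_A(C,C)`, `a ↦ (a • ·)`, is bijective, and `Ext^i_A(C,C) = 0` for `i ≥ 1`. -/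
def IsSemidualizing : Prop :=
  Module.Finite A C ∧ Function.Bijective (LinearMap.lsmul A C) ∧
    ∀ i : ℕ, 1 ≤ i → Subsingleton (ExtGroup A i C C)

/-- The `(A ⋉ C)`-module structure on `Hom_A(A ⋉ C, I)` coming from the `(A ⋉ C)`-action on
the first argument, `(r • f) x = f (r * x)`. -/
noncomputable instance homModule (I : Type) [AddCommGroup I] [Module A I] :
    Module (TrivSqZeroExt A C) (TrivSqZeroExt A C →ₗ[A] I) where
  smul r f := f ∘ₗ LinearMap.mulLeft A r
  one_smul f := by ext x; simp [HSMul.hSMul, SMul.smul]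
  mul_smul r s f := by ext x; simp [HSMul.hSMul, SMul.smul, mul_assoc, mul_left_comm]
  smul_zero r := by ext x; simp [HSMul.hSMul, SMul.smul]
  smul_add r f g := by ext x; simp [HSMul.hSMul, SMul.smul]
  add_smul r s f := by ext x; simp [HSMul.hSMul, SMul.smul, add_mul]
  zero_smul f := by ext x; simp [HSMul.hSMul, SMul.smul]

/-- An `A`-module viewed as an `(A ⋉ C)`-module via the projection `A ⋉ C → A`. -/
noncomputable def moduleOfFst (M : Type) [AddCommGroup M] [Module A M] :
    Module (TrivSqZeroExt A C) M :=
  Module.compHom M (fstHom A A C).toRingHom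

end

/-!
As an `A`-module `A ⋉ C` is `A × C`, so `Ext^i_A(A ⋉ C, C) ≅ Ext^i_A(A, C) × Ext^i_A(C, C)`,
which vanishes for `i ≥ 1` because `A` is projective and `C` is semi-dualizing.

For the isomorphism, `r ↦ (x ↦ snd (r * x))` is `(A ⋉ C)`-linear. An `A`-linear map
`f : A ⋉ C → C` is determined by `f 1 ∈ C` and its restriction to `C`, an element of
`Hom_A(C, C) ≅ A`; reading `r = (a, c)` off these two pieces inverts the map.
-/

open CategoryTheory Limits Opposite

instance projectiveResolutions_additive {C : Type*} [Category C] [Abelian C]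
    [EnoughProjectives C] : (projectiveResolutions C).Additive where
  map_add {X Y f g} := by
    dsimp [projectiveResolutions]
    erw [← Functor.map_add]
    apply HomotopyCategory.eq_of_homotopy
    apply ProjectiveResolution.liftHomotopy (f + g) <;> simp

instance Functor.leftDerived_additive {C D : Type*} [Category C] [Category D]
    [Abelian C] [Abelian D] [EnoughProjectives C] (F : C ⥤ D) [F.Additive] (n : ℕ) :
    (F.leftDerived n).Additive := by
  unfold Functor.leftDerived Functor.leftDerivedToHomotopyCategory
  infer_instance

section

variable {R : Type} [CommRing R] (n : ℕ)

instance ExtGroup.subsingleton_prod (M₁ M₂ N : Type) [AddCommGroup M₁] [Module R M₁]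
    [AddCommGroup M₂] [Module R M₂] [AddCommGroup N] [Module R N]
    [Subsingleton (ExtGroup R n M₁ N)] [Subsingleton (ExtGroup R n M₂ N)] :
    Subsingleton (ExtGroup R n (M₁ × M₂) N) := by
  let F := ((linearYoneda R (ModuleCat R)).obj (ModuleCat.of R N)).rightOp.leftDerived n
  have := preservesBinaryBiproducts_of_preservesBiproducts F
  have hzero (M : Type) [AddCommGroup M] [Module R M] [Subsingleton (ExtGroup R n M N)] :
      IsZero (F.obj (ModuleCat.of R M)) :=
    (@ModuleCat.isZero_of_subsingleton R _ (F.obj (.of R M)).unop ‹_›).op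
  have : IsZero (F.obj (ModuleCat.of R (M₁ × M₂))) :=
    ((biprod_isZero_iff _ _).mpr ⟨hzero M₁, hzero M₂⟩).of_iso
      (F.mapIso (ModuleCat.biprodIsoProd (.of R M₁) (.of R M₂)).symm ≪≫ F.mapBiprod _ _)
  exact ModuleCat.subsingleton_of_isZero this.unop

instance ExtGroup.subsingleton_self_succ (N : Type) [AddCommGroup N] [Module R N] :
    Subsingleton (ExtGroup R (n + 1) R N) :=
  ModuleCat.subsingleton_of_isZero (isZero_Ext_succ_of_projective _ _ n)

end

namespace TrivSqZeroExt

variable (A : Type) [CommRing A] (C : Type) [AddCommGroup C] [Module A C]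

noncomputable def sndMulLeft :
    TrivSqZeroExt A C →ₗ[TrivSqZeroExt A C] (TrivSqZeroExt A C →ₗ[A] C) :=
  LinearMap.toSpanSingleton (TrivSqZeroExt A C) _ (sndHom A C)

variable {A C}

theorem sndMulLeft_apply (r x : TrivSqZeroExt A C) : sndMulLeft A C r x = snd (r * x) := rfl

theorem sndMulLeft_apply_one (r : TrivSqZeroExt A C) : sndMulLeft A C r 1 = snd r := by
  rw [sndMulLeft_apply, mul_one]

theorem sndMulLeft_apply_inr (r : TrivSqZeroExt A C) (c : C) :
    sndMulLeft A C r (inr c) = fst r • c := by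
  simp [sndMulLeft_apply, snd_mul]

theorem sndMulLeft_bijective (h : Function.Bijective (LinearMap.lsmul A C)) :
    Function.Bijective (sndMulLeft A C) := by
  constructor
  · refine (injective_iff_map_eq_zero _).mpr fun r hr => ext ?_ ?_
    · refine h.1 (LinearMap.ext fun c => ?_)
      simpa [sndMulLeft_apply_inr] using LinearMap.congr_fun hr (inr c)
    · simpa [sndMulLeft_apply_one] using LinearMap.congr_fun hr 1
  · intro f
    obtain ⟨a, ha⟩ := h.2 (f ∘ₗ inrHom A C)
    refine ⟨inl a + inr (f 1), linearMap_ext (fun b => ?_) (fun c => ?_)⟩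
    · have hb : (inl b : TrivSqZeroExt A C) = b • 1 := by
        rw [← inl_one, ← inl_smul, smul_eq_mul, mul_one]
      simp [hb, sndMulLeft_apply_one]
    · simpa [sndMulLeft_apply_inr] using LinearMap.congr_fun ha c

end TrivSqZeroExt

theorem hom_trivSqZeroExt_self_iso_general
    (A : Type) [CommRing A] (C : Type) [AddCommGroup C] [Module A C]
    (hC : IsSemidualizing A C) :
    Nonempty ((TrivSqZeroExt A C →ₗ[A] C) ≃ₗ[TrivSqZeroExt A C] TrivSqZeroExt A C) ∧
      ∀ i : ℕ, 1 ≤ i → Subsingleton (ExtGroup A i (TrivSqZeroExt A C) C) := by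
  obtain ⟨-, hbij, hext⟩ := hC
  refine ⟨⟨(LinearEquiv.ofBijective _ (TrivSqZeroExt.sndMulLeft_bijective hbij)).symm⟩,
    fun i hi => ?_⟩
  obtain ⟨n, rfl⟩ := Nat.exists_eq_add_of_le' hi
  have := hext (n + 1) hi
  exact ExtGroup.subsingleton_prod (n + 1) A C C

/-- If `A` is a commutative noetherian ring and `C` a semi-dualizing
`A`-module, then `Hom_A(A ⋉ C, C) ≅ A ⋉ C` as `(A ⋉ C)`-modules, and
`Ext^i_A(A ⋉ C, C) = 0` for all `i ≥ 1`. -/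
theorem hom_trivSqZeroExt_self_iso
    (A : Type) [CommRing A] [IsNoetherianRing A] (C : Type) [AddCommGroup C] [Module A C]
    (hC : IsSemidualizing A C) :
    Nonempty ((TrivSqZeroExt A C →ₗ[A] C) ≃ₗ[TrivSqZeroExt A C] TrivSqZeroExt A C) ∧
      ∀ i : ℕ, 1 ≤ i → Subsingleton (ExtGroup A i (TrivSqZeroExt A C) C) :=
  hom_trivSqZeroExt_self_iso_general A C hC
end

section
/- Let A be a commutative noetherian ring, let C be a semi-dualizing module for A, let I be an injective A-module, and let M be an (A ⋉ C)-module annihilated by the ideal 0 ⋉ C of A ⋉ C. Then every (A ⋉ C)-linear map η : Hom_A(A ⋉ C, I) → M vanishes on the image of the injection Hom_A(A, I) → Hom_A(A ⋉ C, I) induced by the projection A ⋉ C → A; consequently η factors as η = η' ∘ π, where π : Hom_A(A ⋉ C, I) → Hom_A(C, I) is the surjection induced by the inclusion C → A ⋉ C, c ↦ (0,c), and η' : Hom_A(C, I) → M is (A ⋉ C)-linear. -/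
open TrivSqZeroExt

theorem exists_sum_rep {A C I : Type} [CommRing A] [AddCommGroup C] [Module A C]
    [AddCommGroup I] [Module A I] (hfin : Module.Finite A C)
    (hbij : Function.Bijective (LinearMap.lsmul A C)) (hI : Module.Injective A I) (x : I) :
    ∃ (n : ℕ) (c : Fin n → C) (φ : Fin n → (C →ₗ[A] I)), x = ∑ i, (φ i) (c i) := by
  obtain ⟨n, s, hs⟩ := hfin.exists_fin
  let e : A ≃ₗ[A] (C →ₗ[A] C) := LinearEquiv.ofBijective (LinearMap.lsmul A C) hbij
  let G : (C →ₗ[A] C) →ₗ[A] I := (LinearMap.toSpanSingleton A I x) ∘ₗ e.symm.toLinearMap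
  let f : (C →ₗ[A] C) →ₗ[A] (Fin n → C) := LinearMap.pi fun i => LinearMap.applyₗ (s i)
  have hinj : Function.Injective f := by
    rw [← LinearMap.ker_eq_bot, eq_bot_iff]
    intro ψ hψ
    have h0 : (f ψ : Fin n → C) = 0 := LinearMap.mem_ker.1 hψ
    have h1 : Submodule.span A (Set.range s) ≤ LinearMap.ker ψ := Submodule.span_le.2 (by
      rintro _ ⟨i, rfl⟩
      simpa [f] using congrFun h0 i)
    rw [hs] at h1
    exact (Submodule.mem_bot A).2 (LinearMap.ext fun c => h1 Submodule.mem_top)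
  obtain ⟨H, hH⟩ := hI.out f hinj G
  refine ⟨n, s, fun i => H ∘ₗ LinearMap.single A (fun _ => C) i, ?_⟩
  have hfid : f LinearMap.id = s := by
    ext i; simp [f]
  have h2 : ∑ i, (H ∘ₗ LinearMap.single A (fun _ => C) i) (s i) = H (f LinearMap.id) := by
    simp only [LinearMap.comp_apply, LinearMap.single_apply, ← map_sum, Finset.univ_sum_single,
      hfid]
  have he : e.symm LinearMap.id = 1 := by
    rw [LinearEquiv.symm_apply_eq]
    ext c
    simp [e]
  rw [h2, hH, show G LinearMap.id = (e.symm LinearMap.id) • x from rfl, he, one_smul]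

/-- Let `A` be a commutative noetherian ring, `C` a semi-dualizing
`A`-module, `I` an injective `A`-module, and `M` an `(A ⋉ C)`-module annihilated by the
ideal `0 ⋉ C`.  Then every `(A ⋉ C)`-linear map `η : Hom_A(A ⋉ C, I) → M` vanishes on the
image of the injection `Hom_A(A, I) → Hom_A(A ⋉ C, I)` induced by the projection
`A ⋉ C → A`, and consequently `η` factors through the surjection
`π : Hom_A(A ⋉ C, I) → Hom_A(C, I)`, `π f = f ∘ inr`, induced by the inclusion
`C → A ⋉ C`, via an `(A ⋉ C)`-linear map `η' : Hom_A(C, I) → M`. -/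
theorem hom_trivSqZeroExt_map_factors
    (A : Type) [CommRing A] [IsNoetherianRing A] (C : Type) [AddCommGroup C] [Module A C]
    (hC : IsSemidualizing A C)
    (I : Type) [AddCommGroup I] [Module A I] (hI : Module.Injective A I)
    (M : Type) [AddCommGroup M] [Module (TrivSqZeroExt A C) M]
    (hM : ∀ (c : C) (m : M), (TrivSqZeroExt.inr c : TrivSqZeroExt A C) • m = 0)
    (η : (TrivSqZeroExt A C →ₗ[A] I) →ₗ[TrivSqZeroExt A C] M) :
    letI : Module (TrivSqZeroExt A C) (C →ₗ[A] I) := moduleOfFst A C (C →ₗ[A] I)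
    (∀ α : A →ₗ[A] I, η (α ∘ₗ (fstHom A A C).toLinearMap) = 0) ∧
      ∃ η' : (C →ₗ[A] I) →ₗ[TrivSqZeroExt A C] M,
        ∀ f : TrivSqZeroExt A C →ₗ[A] I, η f = η' (f ∘ₗ inrHom A C) := by
  obtain ⟨hfin, hbij, -⟩ := hC
  letI : Module (TrivSqZeroExt A C) (C →ₗ[A] I) := moduleOfFst A C (C →ₗ[A] I)
  have smul_hom : ∀ (r : TrivSqZeroExt A C) (f : TrivSqZeroExt A C →ₗ[A] I)
      (x : TrivSqZeroExt A C), (r • f) x = f (r * x) := fun r f x => rfl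
  have key : ∀ α : A →ₗ[A] I, η (α ∘ₗ (fstHom A A C).toLinearMap) = 0 := by
    intro α
    obtain ⟨n, c, φ, hx⟩ := exists_sum_rep hfin hbij hI (α 1)
    have hdec : α ∘ₗ (fstHom A A C).toLinearMap
        = ∑ i, (inr (c i) : TrivSqZeroExt A C) • ((φ i) ∘ₗ sndHom A C) := by
      ext x
      rw [LinearMap.sum_apply]
      have hterm : ∀ i, (((inr (c i) : TrivSqZeroExt A C) • ((φ i) ∘ₗ sndHom A C)))
          x = x.fst • (φ i) (c i) := by
        intro i
        rw [smul_hom]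
        simp only [LinearMap.comp_apply, sndHom_apply, snd_mul, fst_inr, snd_inr,
          zero_smul, zero_add, op_smul_eq_smul, map_smul]
      simp only [hterm]
      rw [← Finset.smul_sum, ← hx, LinearMap.comp_apply, AlgHom.toLinearMap_apply,
        fstHom_apply, ← map_smul, smul_eq_mul, mul_one]
    rw [hdec, map_sum]
    simp only [map_smul, hM, Finset.sum_const_zero]
  refine ⟨key, ?_⟩
  refine ⟨{ toFun := fun φ => η (φ ∘ₗ sndHom A C)
            map_add' := fun φ ψ => by simp only [LinearMap.add_comp, map_add]
            map_smul' := ?_ }, ?_⟩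
  · intro r φ
    have hsm : (r • φ : C →ₗ[A] I) = r.fst • φ := rfl
    have hd : (r.fst • φ) ∘ₗ sndHom A C
        = r • (φ ∘ₗ sndHom A C)
          - (LinearMap.toSpanSingleton A I (φ r.snd)) ∘ₗ (fstHom A A C).toLinearMap := by
      ext x
      rw [LinearMap.sub_apply, smul_hom]
      simp only [LinearMap.comp_apply, sndHom_apply, LinearMap.smul_apply, snd_mul,
        op_smul_eq_smul, map_add, map_smul, AlgHom.toLinearMap_apply, fstHom_apply,
        LinearMap.toSpanSingleton_apply]
      abel
    simp only [RingHom.id_apply, hsm, hd, map_sub, key, sub_zero, map_smul]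
  · intro f
    have hf : f = (f ∘ₗ inrHom A C) ∘ₗ sndHom A C
        + (f ∘ₗ Algebra.linearMap A (TrivSqZeroExt A C)) ∘ₗ (fstHom A A C).toLinearMap := by
      ext x
      simp only [LinearMap.add_apply, LinearMap.comp_apply, sndHom_apply, inrHom_apply,
        AlgHom.toLinearMap_apply, fstHom_apply, Algebra.linearMap_apply, algebraMap_eq_inl]
      rw [add_comm, ← map_add, inl_fst_add_inr_snd_eq]
    conv_lhs => rw [hf]
    rw [map_add, key, add_zero]
    rfl
end
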